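/- arXiv:2308.11267 — 2 statements merged into one kernel-verified Lean document; each statement's English description precedes it below -/
import Mathlib

section
/- Lagrangian policy gradient theorem: for a finite MDP with combined reward 𝐫 = r − λc, a policy π_θ differentiable in θ, transition kernel P, and starting state s_0, the gradient of the combined value satisfies ∇_θ 𝐕_{π_θ}(s_0) = Σ_{s ∈ S} η(s) Σ_{a ∈ A} 𝐐_{π_θ}(s,a) ∇_θ π_θ(a|s), where η(s) = Σ_{k=0}^∞ γ^k ℙ(s_k = s | s_0, π_θ) is the discounted state-visitation measure. -/
/-!
Differentiating the Bellman equations `V = ∑ₐ π Q`, `Q = 𝐫 + γ P V` gives a Bellman equation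
for the gradient, `∇V = G + γ M ∇V`, where `G(s) = ∑ₐ Q(s,a) ∇π(a|s)` and `M` is the transition
matrix of the chain under `π_θ`. Unrolling it `K` times from `s₀` yields
`∇V(s₀) = ∑_{k<K} γᵏ ∑ₛ dₖ(s) G(s) + γᴷ ∑ₛ d_K(s) ∇V(s)`, and since `dₖ` is a probability vector
the remainder vanishes as `K → ∞`, leaving `∑ₛ η(s) G(s)`.
-/

open Finset Filter Topology Matrix

section Unrolling

variable {S : Type} [Fintype S]
  {W : Type} [AddCommGroup W] [Module ℝ W]
  {γ : ℝ} {M : Matrix S S ℝ} {F G : S → W}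

theorem sum_smul_eq_of_bellman (hF : ∀ s, F s = G s + γ • ∑ s', M s s' • F s') (μ : S → ℝ) :
    ∑ s, μ s • F s = ∑ s, μ s • G s + γ • ∑ s', (μ ᵥ* M) s' • F s' := by
  have hstep : ∀ s, μ s • F s = μ s • G s + ∑ s', (γ * (μ s * M s s')) • F s' := fun s ↦ by
    rw [hF s, smul_add, smul_sum, smul_sum]
    simp only [smul_smul, mul_left_comm]
  simp only [hstep, sum_add_distrib, vecMul, dotProduct, sum_smul, smul_sum, smul_smul]
  rw [sum_comm]

theorem sum_smul_eq_partial_sum_add_tail (hF : ∀ s, F s = G s + γ • ∑ s', M s s' • F s')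
    {d : ℕ → S → ℝ} (hd : ∀ k, d (k + 1) = d k ᵥ* M) (K : ℕ) :
    ∑ s, d 0 s • F s =
      ∑ k ∈ range K, ∑ s, (γ ^ k * d k s) • G s + ∑ s, (γ ^ K * d K s) • F s := by
  induction K with
  | zero => simp
  | succ K ih =>
    simp only [← smul_smul, ← smul_sum] at ih ⊢
    rw [ih, sum_smul_eq_of_bellman hF, ← hd, sum_range_succ, smul_add, smul_smul, ← pow_succ,
      add_assoc]

variable [TopologicalSpace W] [IsTopologicalAddGroup W] [ContinuousSMul ℝ W] [T2Space W]

theorem sum_smul_eq_sum_visitation_smul (hF : ∀ s, F s = G s + γ • ∑ s', M s s' • F s')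
    {d : ℕ → S → ℝ} (hd : ∀ k, d (k + 1) = d k ᵥ* M)
    {η : S → ℝ} (hη : ∀ s, HasSum (fun k ↦ γ ^ k * d k s) (η s)) :
    ∑ s, d 0 s • F s = ∑ s, η s • G s := by
  have hsum : HasSum (fun k ↦ ∑ s, (γ ^ k * d k s) • G s) (∑ s, η s • G s) :=
    hasSum_sum fun s _ ↦ (hη s).smul_const (G s)
  have htail : Tendsto (fun K ↦ ∑ s, (γ ^ K * d K s) • F s) atTop (𝓝 0) := by
    simpa using tendsto_finsetSum univ fun s _ ↦
      (hη s).summable.tendsto_atTop_zero.smul_const (F s)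
  have hpartial : Tendsto (fun K ↦ ∑ k ∈ range K, ∑ s, (γ ^ k * d k s) • G s) atTop
      (𝓝 (∑ s, d 0 s • F s)) := by
    simpa using ((tendsto_const_nhds (x := ∑ s, d 0 s • F s)).sub htail).congr fun K ↦
      sub_eq_iff_eq_add.2 (sum_smul_eq_partial_sum_add_tail hF hd K)
  exact tendsto_nhds_unique hpartial hsum.tendsto_sum_nat

end Unrolling

section Policy

variable {S A : Type} [Fintype S] [Fintype A]

def policyTransition (π : S → A → ℝ) (P : S → A → S → ℝ) : Matrix S S ℝ :=
  of fun s s' ↦ ∑ a, π s a * P s a s'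

theorem policyTransition_mem_rowStochastic [DecidableEq S] {π : S → A → ℝ} {P : S → A → S → ℝ}
    (hπ : ∀ s, (∀ a, 0 ≤ π s a) ∧ ∑ a, π s a = 1)
    (hP : ∀ s a, (∀ s', 0 ≤ P s a s') ∧ ∑ s', P s a s' = 1) :
    policyTransition π P ∈ rowStochastic ℝ S := by
  refine mem_rowStochastic_iff_sum.2 ⟨fun s s' ↦ ?_, fun s ↦ ?_⟩
  · exact sum_nonneg fun a _ ↦ mul_nonneg ((hπ s).1 a) ((hP s a).1 s')
  · simp only [policyTransition, of_apply]
    rw [sum_comm]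
    simp only [← mul_sum, (hP _ _).2, mul_one, (hπ s).2]

theorem mem_Icc_of_vecMul_rowStochastic [DecidableEq S] {M : Matrix S S ℝ}
    (hM : M ∈ rowStochastic ℝ S) {d : ℕ → S → ℝ} (h0 : (∀ s, 0 ≤ d 0 s) ∧ ∑ s, d 0 s = 1)
    (hd : ∀ k, d (k + 1) = d k ᵥ* M) (k : ℕ) (s : S) : d k s ∈ Set.Icc 0 1 := by
  have hdist : ∀ k, (∀ s, 0 ≤ d k s) ∧ ∑ s, d k s = 1 := by
    intro k
    induction k with
    | zero => exact h0
    | succ k ih =>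
      rw [hd]
      refine ⟨nonneg_vecMul_of_mem_rowStochastic hM ih.1, ?_⟩
      simpa [dotProduct_one] using
        vecMul_dotProduct_one_eq_one_rowStochastic hM (by simpa [dotProduct_one] using ih.2)
  exact ⟨(hdist k).1 s, (hdist k).2 ▸ single_le_sum (fun t _ ↦ (hdist k).1 t) (mem_univ s)⟩

theorem summable_pow_mul_of_mem_Icc {γ : ℝ} (hγ0 : 0 ≤ γ) (hγ1 : γ < 1) {f : ℕ → ℝ}
    (hf : ∀ k, f k ∈ Set.Icc 0 1) : Summable fun k ↦ γ ^ k * f k :=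
  (summable_geometric_of_lt_one hγ0 hγ1).of_nonneg_of_le
    (fun k ↦ mul_nonneg (pow_nonneg hγ0 k) (hf k).1)
    (fun k ↦ mul_le_of_le_one_right (pow_nonneg hγ0 k) (hf k).2)

theorem fderiv_value_eq_bellman {E : Type} [NormedAddCommGroup E] [NormedSpace ℝ E]
    (P : S → A → S → ℝ) (R : S → A → ℝ) (γ : ℝ) (pol : E → S → A → ℝ)
    (hpoldiff : ∀ s a, Differentiable ℝ (fun θ ↦ pol θ s a))
    (V : E → S → ℝ) (Q : E → S → A → ℝ)
    (hV : ∀ θ s, V θ s = ∑ a, pol θ s a * Q θ s a)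
    (hQ : ∀ θ s a, Q θ s a = R s a + γ * ∑ s', P s a s' * V θ s')
    (hVdiff : ∀ s, Differentiable ℝ (fun θ ↦ V θ s)) (θ0 : E) (s : S) :
    fderiv ℝ (fun θ ↦ V θ s) θ0 =
      ∑ a, Q θ0 s a • fderiv ℝ (fun θ ↦ pol θ s a) θ0 +
        γ • ∑ s', policyTransition (pol θ0) P s s' • fderiv ℝ (fun θ ↦ V θ s') θ0 := by
  have hQderiv : ∀ a, HasFDerivAt (fun θ ↦ Q θ s a)
      (γ • ∑ s', P s a s' • fderiv ℝ (fun θ ↦ V θ s') θ0) θ0 := fun a ↦ by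
    simp only [hQ]
    exact ((HasFDerivAt.fun_sum fun s' _ ↦
      (hVdiff s' θ0).hasFDerivAt.const_mul (P s a s')).const_mul γ).const_add _
  have hVderiv : HasFDerivAt (fun θ ↦ V θ s)
      (∑ a, (pol θ0 s a • γ • ∑ s', P s a s' • fderiv ℝ (fun θ ↦ V θ s') θ0 +
        Q θ0 s a • fderiv ℝ (fun θ ↦ pol θ s a) θ0)) θ0 := by
    rw [show (fun θ ↦ V θ s) = fun θ ↦ ∑ a, pol θ s a * Q θ s a from funext (hV · s)]
    exact HasFDerivAt.fun_sum fun a _ ↦ (hpoldiff s a θ0).hasFDerivAt.mul (hQderiv a)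
  rw [hVderiv.fderiv, sum_add_distrib, add_comm]
  simp only [policyTransition, of_apply, smul_sum, sum_smul, smul_smul]
  rw [sum_comm]
  simp only [mul_left_comm]

end Policy

theorem lagrangian_policy_gradient_general
    {n : ℕ} (S A : Type) [Fintype S] [Fintype A] [DecidableEq S]
    (P : S → A → S → ℝ) (r c : S → A → ℝ) (γ lam : ℝ)
    (hγ0 : 0 ≤ γ) (hγ1 : γ < 1)
    (hP : ∀ s a, (∀ s', 0 ≤ P s a s') ∧ ∑ s', P s a s' = 1)
    (pol : EuclideanSpace ℝ (Fin n) → S → A → ℝ)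
    (hpol : ∀ θ s, (∀ a, 0 ≤ pol θ s a) ∧ ∑ a, pol θ s a = 1)
    (hpoldiff : ∀ s a, Differentiable ℝ (fun θ => pol θ s a))
    (V : EuclideanSpace ℝ (Fin n) → S → ℝ)
    (Q : EuclideanSpace ℝ (Fin n) → S → A → ℝ)
    (hV : ∀ θ s, V θ s = ∑ a, pol θ s a * Q θ s a)
    (hQ : ∀ θ s a, Q θ s a = (r s a - lam * c s a) + γ * ∑ s', P s a s' * V θ s')
    (hVdiff : ∀ s, Differentiable ℝ (fun θ => V θ s))
    (θ0 : EuclideanSpace ℝ (Fin n)) (s0 : S)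
    (d : ℕ → S → ℝ)
    (hd0 : ∀ s, d 0 s = if s = s0 then (1 : ℝ) else 0)
    (hdrec : ∀ k s', d (k + 1) s' = ∑ s, ∑ a, d k s * pol θ0 s a * P s a s')
    (η : S → ℝ) (hη : ∀ s, η s = ∑' k : ℕ, γ ^ k * d k s) :
    fderiv ℝ (fun θ => V θ s0) θ0
      = ∑ s, η s • ∑ a, Q θ0 s a • fderiv ℝ (fun θ => pol θ s a) θ0 := by
  set M := policyTransition (pol θ0) P
  have hM : M ∈ rowStochastic ℝ S := policyTransition_mem_rowStochastic (hpol θ0) hP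
  have hd : ∀ k, d (k + 1) = d k ᵥ* M := fun k ↦ funext fun s' ↦ by
    simp only [hdrec, vecMul, dotProduct, M, policyTransition, of_apply, mul_sum, mul_assoc]
  have hstart : (∀ s, 0 ≤ d 0 s) ∧ ∑ s, d 0 s = 1 :=
    ⟨fun s ↦ by rw [hd0]; positivity, by simp [hd0]⟩
  have hηsum : ∀ s, HasSum (fun k ↦ γ ^ k * d k s) (η s) := fun s ↦ hη s ▸
    (summable_pow_mul_of_mem_Icc hγ0 hγ1 (mem_Icc_of_vecMul_rowStochastic hM hstart hd · s)).hasSum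
  simpa [hd0] using sum_smul_eq_sum_visitation_smul
    (fderiv_value_eq_bellman P _ γ pol hpoldiff V Q hV hQ hVdiff θ0) hd hηsum

/-- Lagrangian policy gradient theorem: the gradient of the combined value at
`s0` equals `∑_s η(s) ∑_a 𝐐(s,a) ∇π_θ(a|s)` where `η` is the discounted
state-visitation measure. -/
theorem lagrangian_policy_gradient
    {n : ℕ} (S A : Type) [Fintype S] [Fintype A] [DecidableEq S]
    [Nonempty S] [Nonempty A]
    (P : S → A → S → ℝ) (r c : S → A → ℝ) (γ lam : ℝ)
    (hγ0 : 0 ≤ γ) (hγ1 : γ < 1)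
    (hP : ∀ s a, (∀ s', 0 ≤ P s a s') ∧ ∑ s', P s a s' = 1)
    (pol : EuclideanSpace ℝ (Fin n) → S → A → ℝ)
    (hpol : ∀ θ s, (∀ a, 0 ≤ pol θ s a) ∧ ∑ a, pol θ s a = 1)
    (hpoldiff : ∀ s a, Differentiable ℝ (fun θ => pol θ s a))
    (V : EuclideanSpace ℝ (Fin n) → S → ℝ)
    (Q : EuclideanSpace ℝ (Fin n) → S → A → ℝ)
    (hV : ∀ θ s, V θ s = ∑ a, pol θ s a * Q θ s a)
    (hQ : ∀ θ s a, Q θ s a = (r s a - lam * c s a) + γ * ∑ s', P s a s' * V θ s')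
    (hVdiff : ∀ s, Differentiable ℝ (fun θ => V θ s))
    (θ0 : EuclideanSpace ℝ (Fin n)) (s0 : S)
    (d : ℕ → S → ℝ)
    (hd0 : ∀ s, d 0 s = if s = s0 then (1 : ℝ) else 0)
    (hdrec : ∀ k s', d (k + 1) s' = ∑ s, ∑ a, d k s * pol θ0 s a * P s a s')
    (η : S → ℝ) (hη : ∀ s, η s = ∑' k : ℕ, γ ^ k * d k s) :
    fderiv ℝ (fun θ => V θ s0) θ0
      = ∑ s, η s • ∑ a, Q θ0 s a • fderiv ℝ (fun θ => pol θ s a) θ0 :=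
  lagrangian_policy_gradient_general S A P r c γ lam hγ0 hγ1 hP pol hpol hpoldiff V Q hV hQ hVdiff
    θ0 s0 d hd0 hdrec η hη
end

section
/- Finite-horizon adversarial policy gradient theorem: under the same setting, the gradient of the combined value at the starting state satisfies ∇_φ 𝐕(s_0) = Σ_{k=0}^{H} E_{π, π_adv}[ 𝐕(s_{k+1}) ∇_φ log π_adv(s_{k+1} | s_k, a_k; φ) ], where H is the horizon, the expectation is over trajectories generated by policy π and transition kernel π_adv(·|·,·;φ), and π_adv(s'|s,a;φ) > 0 for all transitions. -/
/-!
Differentiating the Bellman recursion `V (n+1) = ∑ₐ π (r + ∑ₛ' P V n)` gives the one-step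
identity `∇V (n+1)(s) = ∑ₐ ∑ₛ' π (V n(s') ∇P(s'|s,a) + P(s'|s,a) ∇V n(s'))`. Averaging it
against a state distribution `e k` turns the second term into the same expression for `V n`
averaged against the next distribution `e (k+1)`, so unrolling down to `V 0 = 0` leaves a sum over the steps of the
`∇P`-terms. Finally `P ∇ log P = ∇P`, since `P > 0`.
-/

open Finset

section FiniteHorizonValue

variable {E S A : Type*} [NormedAddCommGroup E] [NormedSpace ℝ E] [Fintype S] [Fintype A]
  {pol R : S → A → ℝ} {P : E → S → A → S → ℝ} {V : ℕ → E → S → ℝ}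

theorem differentiable_value (hP : ∀ s a s', Differentiable ℝ (fun φ => P φ s a s'))
    (hV0 : ∀ φ s, V 0 φ s = 0)
    (hV : ∀ n φ s, V (n + 1) φ s = ∑ a, pol s a * (R s a + ∑ s', P φ s a s' * V n φ s'))
    (n : ℕ) (s : S) : Differentiable ℝ (fun φ => V n φ s) := by
  induction n generalizing s with
  | zero => simpa only [hV0] using differentiable_const 0
  | succ n ih =>
    simp only [hV]
    exact Differentiable.fun_sum fun a _ => (differentiable_const _).fun_mul
      ((differentiable_const _).fun_add
        (Differentiable.fun_sum fun s' _ => (hP s a s').fun_mul (ih s')))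

theorem fderiv_value_succ (hP : ∀ s a s', Differentiable ℝ (fun φ => P φ s a s'))
    (hV0 : ∀ φ s, V 0 φ s = 0)
    (hV : ∀ n φ s, V (n + 1) φ s = ∑ a, pol s a * (R s a + ∑ s', P φ s a s' * V n φ s'))
    (n : ℕ) (s : S) (φ₀ : E) :
    fderiv ℝ (fun φ => V (n + 1) φ s) φ₀
      = ∑ a, ∑ s', ((pol s a * V n φ₀ s') • fderiv ℝ (fun φ => P φ s a s') φ₀
          + (pol s a * P φ₀ s a s') • fderiv ℝ (fun φ => V n φ s') φ₀) := by
  have hderiv : HasFDerivAt (fun φ => V (n + 1) φ s)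
      (∑ a, pol s a • ∑ s', (P φ₀ s a s' • fderiv ℝ (fun φ => V n φ s') φ₀
          + V n φ₀ s' • fderiv ℝ (fun φ => P φ s a s') φ₀)) φ₀ := by
    simp only [hV]
    refine HasFDerivAt.fun_sum fun a _ =>
      ((HasFDerivAt.fun_sum fun s' _ => ?_).const_add _).const_mul _
    exact (hP s a s' φ₀).hasFDerivAt.mul (differentiable_value hP hV0 hV n s' φ₀).hasFDerivAt
  rw [hderiv.fderiv]
  simp only [smul_sum, smul_add, smul_smul, add_comm]

/-- The initial weights `e 0` are arbitrary so that the induction can shift `e` by one step. -/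
theorem sum_smul_fderiv_value_succ (hP : ∀ s a s', Differentiable ℝ (fun φ => P φ s a s'))
    (hV0 : ∀ φ s, V 0 φ s = 0)
    (hV : ∀ n φ s, V (n + 1) φ s = ∑ a, pol s a * (R s a + ∑ s', P φ s a s' * V n φ s'))
    (φ₀ : E) (n : ℕ) (e : ℕ → S → ℝ)
    (he : ∀ k s', e (k + 1) s' = ∑ s, ∑ a, e k s * pol s a * P φ₀ s a s') :
    ∑ s, e 0 s • fderiv ℝ (fun φ => V (n + 1) φ s) φ₀
      = ∑ k ∈ range (n + 1), ∑ s, ∑ a, ∑ s',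
          (e k s * pol s a * V (n - k) φ₀ s') • fderiv ℝ (fun φ => P φ s a s') φ₀ := by
  induction n generalizing e with
  | zero => simp [fderiv_value_succ hP hV0 hV, hV0]
  | succ n ih =>
    have hnext : ∑ s, ∑ a, ∑ s', (e 0 s * pol s a * P φ₀ s a s') •
          fderiv ℝ (fun φ => V (n + 1) φ s') φ₀
        = ∑ s', e 1 s' • fderiv ℝ (fun φ => V (n + 1) φ s') φ₀ := by
      simp only [he 0, sum_smul]
      exact (sum_congr rfl fun s _ => sum_comm).trans sum_comm
    rw [sum_range_succ']
    simp only [Nat.add_sub_add_right, Nat.sub_zero]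
    rw [← ih (fun k => e (k + 1)) (fun k => he (k + 1)), ← hnext]
    simp only [fderiv_value_succ hP hV0 hV, smul_sum, smul_add, smul_smul, sum_add_distrib,
      mul_assoc]
    exact add_comm _ _

end FiniteHorizonValue

theorem smul_fderiv_log {E : Type*} [NormedAddCommGroup E] [NormedSpace ℝ E] {f : E → ℝ}
    {x : E} (hf : DifferentiableAt ℝ f x) (hx : f x ≠ 0) :
    f x • fderiv ℝ (fun y => Real.log (f y)) x = fderiv ℝ f x := by
  rw [(hf.hasFDerivAt.log hx).fderiv, smul_smul, mul_inv_cancel₀ hx, one_smul]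

theorem adversarial_policy_gradient_general
    {m : ℕ} (S A : Type) [Fintype S] [Fintype A] [DecidableEq S]
    (pol : S → A → ℝ) (r c : S → A → ℝ) (lam : ℝ) (H : ℕ)
    (Padv : EuclideanSpace ℝ (Fin m) → S → A → S → ℝ)
    (hPadvpos : ∀ φ s a s', 0 < Padv φ s a s')
    (hPdiff : ∀ s a s', Differentiable ℝ (fun φ => Padv φ s a s'))
    (V : ℕ → EuclideanSpace ℝ (Fin m) → S → ℝ)
    (hV0 : ∀ φ s, V 0 φ s = 0)
    (hVrec : ∀ k φ s, V (k + 1) φ s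
        = ∑ a, pol s a * ((r s a - lam * c s a) + ∑ s', Padv φ s a s' * V k φ s'))
    (φ0 : EuclideanSpace ℝ (Fin m)) (s0 : S)
    (d : ℕ → S → ℝ)
    (hd0 : ∀ s, d 0 s = if s = s0 then (1 : ℝ) else 0)
    (hdrec : ∀ k s', d (k + 1) s' = ∑ s, ∑ a, d k s * pol s a * Padv φ0 s a s') :
    fderiv ℝ (fun φ => V (H + 1) φ s0) φ0
      = ∑ k ∈ Finset.range (H + 1), ∑ s, ∑ a, ∑ s',
          (d k s * pol s a * Padv φ0 s a s' * V (H - k) φ0 s') •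
            fderiv ℝ (fun φ => Real.log (Padv φ s a s')) φ0 := by
  have hstart : fderiv ℝ (fun φ => V (H + 1) φ s0) φ0
      = ∑ s, d 0 s • fderiv ℝ (fun φ => V (H + 1) φ s) φ0 := by
    simp [hd0, ite_smul]
  rw [hstart, sum_smul_fderiv_value_succ hPdiff hV0 hVrec φ0 H d hdrec]
  refine sum_congr rfl fun k _ => sum_congr rfl fun s _ => sum_congr rfl fun a _ =>
    sum_congr rfl fun s' _ => ?_
  rw [← smul_fderiv_log (hPdiff s a s' φ0) (hPadvpos φ0 s a s').ne', smul_smul]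
  congr 1
  ring

/-- Finite-horizon adversarial policy gradient theorem (REINFORCE form):
`∇_φ 𝐕(s_0) = ∑_{k=0}^{H} E_{π,π_adv}[ 𝐕(s_{k+1}) ∇_φ log π_adv(s_{k+1}|s_k,a_k) ]`,
where the expectation is written via the state distribution `d k` at step `k`
under `π` and `π_adv(·;φ0)`, and `𝐕` is the remaining-horizon combined value. -/
theorem adversarial_policy_gradient
    {m : ℕ} (S A : Type) [Fintype S] [Fintype A] [DecidableEq S]
    [Nonempty S] [Nonempty A]
    (pol : S → A → ℝ) (r c : S → A → ℝ) (lam : ℝ) (H : ℕ)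
    (hpol : ∀ s, (∀ a, 0 ≤ pol s a) ∧ ∑ a, pol s a = 1)
    (Padv : EuclideanSpace ℝ (Fin m) → S → A → S → ℝ)
    (hPadvpos : ∀ φ s a s', 0 < Padv φ s a s')
    (hPadvsum : ∀ φ s a, ∑ s', Padv φ s a s' = 1)
    (hPdiff : ∀ s a s', Differentiable ℝ (fun φ => Padv φ s a s'))
    (V : ℕ → EuclideanSpace ℝ (Fin m) → S → ℝ)
    (hV0 : ∀ φ s, V 0 φ s = 0)
    (hVrec : ∀ k φ s, V (k + 1) φ s
        = ∑ a, pol s a * ((r s a - lam * c s a) + ∑ s', Padv φ s a s' * V k φ s'))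
    (φ0 : EuclideanSpace ℝ (Fin m)) (s0 : S)
    (d : ℕ → S → ℝ)
    (hd0 : ∀ s, d 0 s = if s = s0 then (1 : ℝ) else 0)
    (hdrec : ∀ k s', d (k + 1) s' = ∑ s, ∑ a, d k s * pol s a * Padv φ0 s a s') :
    fderiv ℝ (fun φ => V (H + 1) φ s0) φ0
      = ∑ k ∈ Finset.range (H + 1), ∑ s, ∑ a, ∑ s',
          (d k s * pol s a * Padv φ0 s a s' * V (H - k) φ0 s') •
            fderiv ℝ (fun φ => Real.log (Padv φ s a s')) φ0 :=
  adversarial_policy_gradient_general S A pol r c lam H Padv hPadvpos hPdiff V hV0 hVrec φ0 s0 d hd0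
    hdrec
end
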